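/- arXiv:1011.1828 — 3 statements merged into one kernel-verified Lean document; each statement's English description precedes it below -/
import Mathlib

section
/- Let H be an m×n real matrix with rank H = n ≥ 1, and let a* be a nonzero vector of minimum cardinality (minimum number of nonzero entries) among all nonzero vectors in Im(H). Let U be the set of indices i with a*_i = 0, and let H_U be the submatrix of H consisting of rows indexed by U. Then rank(H_U) = n - 1. -/
/-!
If `d` lies in the kernel of `H_U`, then `H d` is supported inside the support of `a* = H c`.
Subtracting the multiple of `a*` that agrees with `H d` at one point of that support gives a
vector of `Im H` with strictly smaller support, which must vanish by minimality. Hence `H d` is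
a multiple of `a*`, and by injectivity of `H` the kernel of `H_U` is the line spanned by `c`;
rank–nullity gives `rank H_U = n - 1`.
-/

open Function Module Matrix

section SupportMinimal

variable {K ι : Type*} [Field K] [Finite ι]

theorem Submodule.mem_span_singleton_of_support_subset_of_minimal
    {S : Submodule K (ι → K)} {a b : ι → K} (ha : a ∈ S) (hb : b ∈ S) (ha0 : a ≠ 0)
    (hmin : ∀ x ∈ S, x ≠ 0 → (support a).ncard ≤ (support x).ncard)
    (hsub : support b ⊆ support a) : b ∈ K ∙ a := by
  obtain ⟨i₀, hi₀⟩ : ∃ i, a i ≠ 0 := ne_iff.mp ha0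
  set t := b i₀ / a i₀
  have hsupp : support (b - t • a) ⊆ support a \ {i₀} := by
    intro i hi
    refine ⟨fun hai => hi ?_, fun hii => hi ?_⟩
    · simp [notMem_support.mp fun h => hsub h hai, hai]
    · rw [Set.mem_singleton_iff.mp hii]
      simp [t, hi₀]
  have hlt : (support (b - t • a)).ncard < (support a).ncard :=
    (Set.ncard_le_ncard hsupp).trans_lt (Set.ncard_sdiff_singleton_lt_of_mem hi₀)
  have hzero : b - t • a = 0 := by
    by_contra hne
    exact (hmin _ (S.sub_mem hb (S.smul_mem t ha)) hne).not_gt hlt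
  exact Submodule.mem_span_singleton.mpr ⟨t, (sub_eq_zero.mp hzero).symm⟩

end SupportMinimal

namespace Matrix

variable {K m n : Type*} [Field K] [Fintype n]

theorem rank_add_finrank_ker_mulVecLin (A : Matrix m n K) :
    A.rank + finrank K (LinearMap.ker A.mulVecLin) = Fintype.card n := by
  rw [rank, LinearMap.finrank_range_add_finrank_ker, finrank_fintype_fun_eq_card]

theorem mulVec_injective_of_rank_eq_card {A : Matrix m n K} (h : A.rank = Fintype.card n) :
    Injective A.mulVec := by
  have hker : finrank K (LinearMap.ker A.mulVecLin) = 0 := by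
    have := A.rank_add_finrank_ker_mulVecLin
    omega
  exact LinearMap.ker_eq_bot.mp (Submodule.finrank_eq_zero.mp hker)

variable [Finite m]

theorem ker_mulVecLin_submatrix_zeroRows_eq_span_singleton {A : Matrix m n K}
    (hA : Injective A.mulVec) {c : n → K} (hc : A *ᵥ c ≠ 0)
    (hmin : ∀ c', A *ᵥ c' ≠ 0 → (support (A *ᵥ c)).ncard ≤ (support (A *ᵥ c')).ncard) :
    LinearMap.ker (A.submatrix (fun i : {i // (A *ᵥ c) i = 0} => (i : m)) id).mulVecLin =
      K ∙ c := by
  apply le_antisymm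
  · intro d hd
    have hsub : support (A *ᵥ d) ⊆ support (A *ᵥ c) := fun i hi hci =>
      hi (congrFun (LinearMap.mem_ker.mp hd) ⟨i, hci⟩)
    obtain ⟨t, ht⟩ := Submodule.mem_span_singleton.mp <|
      Submodule.mem_span_singleton_of_support_subset_of_minimal (S := LinearMap.range A.mulVecLin)
        ⟨c, rfl⟩ ⟨d, rfl⟩ hc (by rintro _ ⟨c', rfl⟩; exact hmin c') hsub
    exact Submodule.mem_span_singleton.mpr ⟨t, hA (by rw [mulVec_smul]; exact ht)⟩
  · rw [Submodule.span_le, Set.singleton_subset_iff]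
    exact LinearMap.mem_ker.mpr (funext fun i => i.prop)

end Matrix

theorem min_cardinality_attack_rank_general (m n : ℕ)
    (H : Matrix (Fin m) (Fin n) ℝ) (hrank : H.rank = n)
    (c : Fin n → ℝ) (ha : H.mulVec c ≠ 0)
    (hmin : ∀ c' : Fin n → ℝ, H.mulVec c' ≠ 0 →
      Set.ncard {i | H.mulVec c i ≠ 0} ≤ Set.ncard {i | H.mulVec c' i ≠ 0}) :
    (H.submatrix (fun i : {i : Fin m // H.mulVec c i = 0} => (i : Fin m)) id).rank
      = n - 1 := by
  have hinj := mulVec_injective_of_rank_eq_card (hrank.trans (Fintype.card_fin n).symm)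
  have hc0 : c ≠ 0 := by rintro rfl; exact ha (mulVec_zero H)
  have hrn := rank_add_finrank_ker_mulVecLin
    (H.submatrix (fun i : {i : Fin m // H.mulVec c i = 0} => (i : Fin m)) id)
  rw [ker_mulVecLin_submatrix_zeroRows_eq_span_singleton hinj ha hmin, finrank_span_singleton hc0,
    Fintype.card_fin] at hrn
  omega

/-- If a* = Hc is a nonzero vector of minimum support cardinality in Im(H)
(H of full column rank n ≥ 1), and U = {i | a*_i = 0}, then rank(H_U) = n - 1. -/
theorem min_cardinality_attack_rank (m n : ℕ) (hn : 1 ≤ n)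
    (H : Matrix (Fin m) (Fin n) ℝ) (hrank : H.rank = n)
    (c : Fin n → ℝ) (ha : H.mulVec c ≠ 0)
    (hmin : ∀ c' : Fin n → ℝ, H.mulVec c' ≠ 0 →
      Set.ncard {i | H.mulVec c i ≠ 0} ≤ Set.ncard {i | H.mulVec c' i ≠ 0}) :
    (H.submatrix (fun i : {i : Fin m // H.mulVec c i = 0} => (i : Fin m)) id).rank
      = n - 1 :=
  min_cardinality_attack_rank_general m n H hrank c ha hmin
end

section
/- Under the hypotheses of the previous statement (a* a minimum-cardinality nonzero vector in Im(H), U its zero set, rank(H_U) = n - 1), for every index i ∉ U, the submatrix H_{U ∪ {i}} obtained by adjoining row i to H_U has rank n. -/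
open Matrix Module

/-
The kernel of `H_U` is a line, and it contains `c` because `(H c)_j = 0` for every `j ∈ U`.
A vector killed by `H_{U ∪ {i}}` is therefore a multiple `t • c`, and its `i`-th entry
`t * (H c)_i` vanishes only for `t = 0`; so `H_{U ∪ {i}}` is injective, hence of rank `n`.
-/

namespace Matrix

variable {ι κ n K : Type*} [Field K] [Fintype n]

theorem submatrix_id_mulVec (A : Matrix ι n K) (f : κ → ι) (x : n → K) :
    A.submatrix f id *ᵥ x = fun j => (A *ᵥ x) (f j) :=
  rfl

theorem finrank_ker_mulVecLin (A : Matrix ι n K) :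
    finrank K (LinearMap.ker A.mulVecLin) = Fintype.card n - A.rank := by
  have := A.mulVecLin.finrank_range_add_finrank_ker
  rw [finrank_fintype_fun_eq_card] at this
  rw [rank]
  omega

theorem ker_mulVecLin_eq_span_singleton (A : Matrix ι n K) (hA : A.rank = Fintype.card n - 1)
    {x : n → K} (hx : A *ᵥ x = 0) (hx0 : x ≠ 0) :
    LinearMap.ker A.mulVecLin = K ∙ x := by
  have hcard : 0 < Fintype.card n := by
    obtain ⟨j, -⟩ := Function.ne_iff.mp hx0
    exact Fintype.card_pos_iff.mpr ⟨j⟩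
  refine eq_span_singleton_of_mem_of_finrank_eq_one ?_ hx hx0
  rw [finrank_ker_mulVecLin, hA]
  omega

theorem rank_eq_card_width_of_ker_mulVecLin_eq_bot (A : Matrix ι n K)
    (hA : LinearMap.ker A.mulVecLin = ⊥) : A.rank = Fintype.card n := by
  rw [rank, LinearMap.finrank_range_of_inj (LinearMap.ker_eq_bot.mp hA),
    finrank_fintype_fun_eq_card]

theorem rank_submatrix_adjoin_row (A : Matrix ι n K) (p : ι → Prop) {x : n → K}
    (hx : ∀ j, p j → (A *ᵥ x) j = 0)
    (hA : (A.submatrix (Subtype.val : {j // p j} → ι) id).rank = Fintype.card n - 1)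
    {i : ι} (hi : (A *ᵥ x) i ≠ 0) :
    (A.submatrix (Subtype.val : {j // p j ∨ j = i} → ι) id).rank = Fintype.card n := by
  refine rank_eq_card_width_of_ker_mulVecLin_eq_bot _ (ker_mulVecLin_eq_bot_iff.mpr ?_)
  intro v hv
  have hv_j (j : ι) (hj : p j ∨ j = i) : (A *ᵥ v) j = 0 := congrFun hv ⟨j, hj⟩
  have hx0 : x ≠ 0 := by
    rintro rfl
    simp at hi
  have hv_ker : v ∈ LinearMap.ker (A.submatrix (Subtype.val : {j // p j} → ι) id).mulVecLin := by
    rw [LinearMap.mem_ker, mulVecLin_apply, submatrix_id_mulVec]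
    exact funext fun j => hv_j j (Or.inl j.2)
  rw [ker_mulVecLin_eq_span_singleton _ hA (funext fun j => hx j j.2) hx0,
    Submodule.mem_span_singleton] at hv_ker
  obtain ⟨t, rfl⟩ := hv_ker
  have ht : t * (A *ᵥ x) i = 0 := by
    simpa [mulVec_smul] using hv_j i (Or.inr rfl)
  simp [(mul_eq_zero.mp ht).resolve_right hi]

end Matrix

theorem adjoining_corrupted_row_full_rank_general (m n : ℕ)
    (H : Matrix (Fin m) (Fin n) ℝ)
    (c : Fin n → ℝ)
    (hU : (H.submatrix (fun i : {i : Fin m // H.mulVec c i = 0} => (i : Fin m)) id).rank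
      = n - 1)
    (i : Fin m) (hi : H.mulVec c i ≠ 0) :
    (H.submatrix
      (fun j : {j : Fin m // H.mulVec c j = 0 ∨ j = i} => (j : Fin m)) id).rank
      = n := by
  simpa using H.rank_submatrix_adjoin_row (fun j => (H *ᵥ c) j = 0) (fun _ hj => hj)
    (by simpa using hU) hi

/-- Under the hypotheses of Lemma 1 (a* = Hc a minimum-cardinality nonzero vector
in Im(H), U its zero set, rank(H_U) = n-1), adjoining any row i ∉ U to H_U
yields a submatrix of full rank n. -/
theorem adjoining_corrupted_row_full_rank (m n : ℕ) (hn : 1 ≤ n)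
    (H : Matrix (Fin m) (Fin n) ℝ) (hrank : H.rank = n)
    (c : Fin n → ℝ) (ha : H.mulVec c ≠ 0)
    (hmin : ∀ c' : Fin n → ℝ, H.mulVec c' ≠ 0 →
      Set.ncard {i | H.mulVec c i ≠ 0} ≤ Set.ncard {i | H.mulVec c' i ≠ 0})
    (hU : (H.submatrix (fun i : {i : Fin m // H.mulVec c i = 0} => (i : Fin m)) id).rank
      = n - 1)
    (i : Fin m) (hi : H.mulVec c i ≠ 0) :
    (H.submatrix
      (fun j : {j : Fin m // H.mulVec c j = 0 ∨ j = i} => (j : Fin m)) id).rank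
      = n :=
  adjoining_corrupted_row_full_rank_general m n H c hU i hi
end

section
/- Let H be an m×n matrix with rank n, and let H̃ be obtained from H by: scaling one row k by a nonzero scalar b, replacing row k₁ by (row k₁) + (b-1)(row k), and replacing row k₂ by (row k₂) - (b-1)(row k). If a ∈ Im(H) is a vector with k, k₁, k₂ ∈ U, where U = {i | a_i = 0}, then a ∈ Im(H̃). -/
open Matrix

/-- A line-parameter perturbation affecting only rows k, k₁, k₂ (scaling row k
by b ≠ 0 and adjusting the two incident injection rows) preserves stealthiness
of any attack a ∈ Im(H) vanishing on rows k, k₁, k₂. -/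
theorem perturbation_preserves_stealthy_attack (m n : ℕ)
    (H Ht : Matrix (Fin m) (Fin n) ℝ) (hrank : H.rank = n)
    (b : ℝ) (hb : b ≠ 0) (k k₁ k₂ : Fin m)
    (hk : Ht k = b • H k)
    (hk₁ : Ht k₁ = H k₁ + (b - 1) • H k)
    (hk₂ : Ht k₂ = H k₂ - (b - 1) • H k)
    (hother : ∀ i : Fin m, i ≠ k → i ≠ k₁ → i ≠ k₂ → Ht i = H i)
    (a : Fin m → ℝ) (c : Fin n → ℝ) (hac : a = H.mulVec c)
    (hak : a k = 0) (hak₁ : a k₁ = 0) (hak₂ : a k₂ = 0) :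
    ∃ c' : Fin n → ℝ, a = Ht.mulVec c' := by
  have hHk : H k ⬝ᵥ c = 0 := by rw [hac] at hak; exact hak
  refine ⟨c, funext fun i => ?_⟩
  have : Ht.mulVec c i = Ht i ⬝ᵥ c := rfl
  rw [this]
  by_cases h1 : i = k
  · subst h1
    rw [hk, smul_dotProduct, hHk, smul_zero, hak]
  by_cases h2 : i = k₁
  · subst h2
    rw [hk₁, add_dotProduct, smul_dotProduct, hHk, smul_zero, add_zero, hac]
    rfl
  by_cases h3 : i = k₂
  · subst h3
    rw [hk₂, sub_dotProduct, smul_dotProduct, hHk, smul_zero, sub_zero, hac]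
    rfl
  · rw [hother i h1 h2 h3, hac]; rfl
end
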